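/- arXiv:1102.2354 — 4 statements merged into one kernel-verified Lean document; each statement's English description precedes it below -/
import Mathlib

section
/- Let a > 0 and b be real numbers. Then ∫_{-∞}^{∞} |λ| e^{-aλ² + 2bλ} dλ = a^{-1} · ₁F₁(1, 1/2, b²/a), where ₁F₁ is the confluent hypergeometric function of the first kind (using Γ(1) = 1). -/
/-!
Expand `exp (2 b x)` in its power series and integrate term by term against the even weight
`|x| exp (-a x²)`; this is justified because `|x| exp (2 |b| |x| - a x²)` is integrable (complete
the square). Odd moments of the weight vanish, and the even ones are Gamma integrals:
`∫ |x| x^(2k) exp (-a x²) = k! / a^(k+1)`. The `k`-th surviving term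
`(2b)^(2k) k! / ((2k)! a^(k+1))` is the `k`-th term of `a⁻¹ ₁F₁(1, 1/2, b²/a)` because
`(1/2)_k 4^k k! = (2k)!`.
-/

/-- The confluent hypergeometric function of the first kind,
`₁F₁(a, b, z) = ∑_{k≥0} (a)_k z^k / ((b)_k k!)`. -/
noncomputable def hyp1F1 (a b z : ℝ) : ℝ :=
  ∑' k : ℕ, ((ascPochhammer ℝ k).eval a * z ^ k) /
    ((ascPochhammer ℝ k).eval b * (Nat.factorial k))

open MeasureTheory Real Set
open scoped Nat

theorem Real.hasSum_pow_div_factorial (x : ℝ) : HasSum (fun n : ℕ => x ^ n / n !) (exp x) :=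
  Real.exp_eq_exp_ℝ ▸ NormedSpace.expSeries_div_hasSum_exp x

theorem ascPochhammer_half_mul_four_pow_mul_factorial {K : Type*} [Field K] [CharZero K]
    (k : ℕ) : (ascPochhammer K k).eval (1 / 2) * (4 ^ k * k !) = (2 * k)! := by
  induction k with
  | zero => simp
  | succ n ih =>
    rw [ascPochhammer_succ_eval, show 2 * (n + 1) = 2 * n + 1 + 1 by ring, Nat.factorial_succ,
      Nat.factorial_succ, Nat.factorial_succ (2 * n)]
    push_cast
    linear_combination ((1 / 2 + (n : K)) * 4 * (n + 1)) * ih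

theorem hyp1F1_one_half (z : ℝ) :
    hyp1F1 1 (1 / 2) z = ∑' k : ℕ, 4 ^ k * k ! / (2 * k)! * z ^ k := by
  refine tsum_congr fun k => ?_
  have hhalf := ascPochhammer_half_mul_four_pow_mul_factorial (K := ℝ) k
  rw [ascPochhammer_eval_one, ← hhalf]
  field_simp

theorem hasSum_integral_mul_exp_mul {α : Type*} [MeasurableSpace α] {μ : Measure α}
    {f X : α → ℝ} (hf : AEStronglyMeasurable f μ) (hX : AEStronglyMeasurable X μ) (t : ℝ)
    (hint : Integrable (fun x => |f x| * exp (|t| * |X x|)) μ) :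
    HasSum (fun n : ℕ => t ^ n / n ! * ∫ x, f x * X x ^ n ∂μ) (∫ x, f x * exp (t * X x) ∂μ) := by
  simp_rw [← integral_const_mul]
  refine hasSum_integral_of_dominated_convergence
    (fun n x => |f x| * ((|t| * |X x|) ^ n / n !))
    (fun n => (hf.mul (hX.pow n)).const_mul _) (fun n => ?_) ?_ ?_ ?_
  · refine Filter.Eventually.of_forall fun x => le_of_eq ?_
    simp only [norm_mul, norm_div, norm_pow, Real.norm_eq_abs, Nat.abs_cast, mul_pow]
    ring
  · exact Filter.Eventually.of_forall fun x =>
      ((Real.hasSum_pow_div_factorial _).mul_left _).summable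
  · simpa only [((Real.hasSum_pow_div_factorial _).mul_left _).tsum_eq] using hint
  · refine Filter.Eventually.of_forall fun x => ?_
    have hexp := (Real.hasSum_pow_div_factorial (t * X x)).mul_left (f x)
    rwa [show (fun n => f x * ((t * X x) ^ n / n !)) = fun n => t ^ n / n ! * (f x * X x ^ n) from
      funext fun n => by ring] at hexp

theorem integral_eq_zero_of_odd {f : ℝ → ℝ} (hf : ∀ x, f (-x) = -f x) : ∫ x, f x = 0 := by
  have h := integral_neg_eq_self f volume
  simp only [hf, integral_neg] at h
  linarith

theorem integrable_abs_mul_exp_neg_mul_sq_mul_exp_mul_abs {a : ℝ} (ha : 0 < a) (c : ℝ) :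
    Integrable (fun x : ℝ => |x| * exp (-a * x ^ 2) * exp (c * |x|)) := by
  have hdom : Integrable (fun x : ℝ => exp (c ^ 2 / (2 * a)) * |x * exp (-(a / 2) * x ^ 2)|) :=
    (integrable_mul_exp_neg_mul_sq (half_pos ha)).abs.const_mul _
  refine hdom.mono' (by fun_prop) (Filter.Eventually.of_forall fun x => ?_)
  have hsq : c * |x| + -a * x ^ 2 ≤ c ^ 2 / (2 * a) + -(a / 2) * x ^ 2 := by
    have : c ^ 2 / (2 * a) + -(a / 2) * x ^ 2 - (c * |x| + -a * x ^ 2)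
        = (a * |x| - c) ^ 2 / (2 * a) := by
      field_simp
      linear_combination (-a ^ 2) * sq_abs x
    nlinarith [this, show 0 ≤ (a * |x| - c) ^ 2 / (2 * a) by positivity]
  rw [Real.norm_eq_abs, abs_of_nonneg (by positivity), abs_mul, abs_of_pos (exp_pos _),
    mul_assoc, ← exp_add, add_comm (-a * x ^ 2), mul_left_comm, ← exp_add]
  exact mul_le_mul_of_nonneg_left (exp_le_exp.2 hsq) (abs_nonneg x)

theorem integral_abs_mul_exp_neg_mul_sq_mul_pow_odd (a : ℝ) (k : ℕ) :
    ∫ x : ℝ, |x| * exp (-a * x ^ 2) * x ^ (2 * k + 1) = 0 :=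
  integral_eq_zero_of_odd fun x => by
    rw [abs_neg, neg_sq, Odd.neg_pow ⟨k, rfl⟩ x]
    ring

theorem integral_abs_mul_exp_neg_mul_sq_mul_pow_even {a : ℝ} (ha : 0 < a) (k : ℕ) :
    ∫ x : ℝ, |x| * exp (-a * x ^ 2) * x ^ (2 * k) = k ! / a ^ (k + 1) := by
  have hcomp (x : ℝ) : |x| * exp (-a * x ^ 2) * x ^ (2 * k)
      = |x| ^ ((2 * k + 1 : ℕ) : ℝ) * exp (-a * |x| ^ (2 : ℝ)) := by
    rw [Real.rpow_natCast, Real.rpow_two, sq_abs, pow_succ |x| (2 * k),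
      Even.pow_abs ⟨k, two_mul k⟩ x]
    ring
  simp_rw [hcomp]
  rw [integral_comp_abs (f := fun t => t ^ ((2 * k + 1 : ℕ) : ℝ) * exp (-a * t ^ (2 : ℝ))),
    integral_rpow_mul_exp_neg_mul_rpow two_pos (neg_one_lt_zero.trans_le (Nat.cast_nonneg _)) ha]
  have hexp : ((2 * k + 1 : ℕ) + 1 : ℝ) / 2 = k + 1 := by push_cast; ring
  rw [neg_div, hexp, Real.Gamma_nat_eq_factorial, Real.rpow_neg ha.le, ← Nat.cast_succ,
    Real.rpow_natCast]
  field_simp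

theorem stmt0 (a b : ℝ) (ha : 0 < a) :
    ∫ x : ℝ, |x| * Real.exp (-a * x ^ 2 + 2 * b * x)
      = a⁻¹ * hyp1F1 1 (1 / 2) (b ^ 2 / a) := by
  have hseries := hasSum_integral_mul_exp_mul (μ := volume)
    (f := fun x : ℝ => |x| * exp (-a * x ^ 2)) (X := id) (by fun_prop) (by fun_prop) (2 * b)
    (by simpa only [id, abs_mul, abs_abs, abs_of_pos (exp_pos _)] using
      integrable_abs_mul_exp_neg_mul_sq_mul_exp_mul_abs ha (|2 * b|))
  have heven := (Function.Injective.hasSum_iff (mul_right_injective₀ two_ne_zero) fun n hn => by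
    obtain ⟨k, rfl⟩ | ⟨k, rfl⟩ := Nat.even_or_odd n
    · exact absurd ⟨k, two_mul k⟩ hn
    · simp only [id, integral_abs_mul_exp_neg_mul_sq_mul_pow_odd, mul_zero]).2 hseries
  simp only [Function.comp_def, id, integral_abs_mul_exp_neg_mul_sq_mul_pow_even ha] at heven
  rw [hyp1F1_one_half, ← tsum_mul_left]
  simp only [exp_add, ← mul_assoc]
  rw [← heven.tsum_eq]
  refine tsum_congr fun k => ?_
  rw [pow_mul, div_pow]
  field_simp
  ring
end

section
/- Let a > 0 and b be real numbers, and let n be an even natural number. Then ∫_{-∞}^{∞} |λ| λⁿ e^{-aλ² + 2bλ} dλ = a^{-(n+2)/2} · Γ((n+2)/2) · ₁F₁((n+2)/2, 1/2, b²/a). -/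
open MeasureTheory Real Set Filter Topology

theorem hasSum_integral_of_nonneg {α : Type*} [MeasurableSpace α] {μ : Measure α}
    {f : ℕ → α → ℝ} {F : α → ℝ} (hf : ∀ m, Integrable (f m) μ) (hF : Integrable F μ)
    (hf_nonneg : ∀ m, 0 ≤ᵐ[μ] f m) (hsum : ∀ᵐ x ∂μ, HasSum (fun m ↦ f m x) (F x)) :
    HasSum (fun m ↦ ∫ x, f m x ∂μ) (∫ x, F x ∂μ) := by
  rw [hasSum_iff_tendsto_nat_of_nonneg (fun m ↦ integral_nonneg_of_ae (hf_nonneg m))]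
  simp_rw [← integral_finsetSum _ fun m _ ↦ hf m]
  refine integral_tendsto_of_tendsto_of_monotone
    (fun N ↦ integrable_finsetSum _ fun m _ ↦ hf m) hF ?_ (hsum.mono fun x hx ↦ hx.tendsto_sum_nat)
  filter_upwards [ae_all_iff.2 hf_nonneg] with x hx
  exact monotone_nat_of_le_succ fun N ↦ by
    simpa [Finset.sum_range_succ] using hx N

theorem integral_eq_integral_Ioi_add_comp_neg {E : Type*} [NormedAddCommGroup E]
    [NormedSpace ℝ E] {f : ℝ → E} (hf : Integrable f) :
    ∫ x, f x = ∫ x in Ioi 0, (f x + f (-x)) := by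
  rw [integral_add hf.integrableOn hf.comp_neg.integrableOn, integral_comp_neg_Ioi, neg_zero,
    ← compl_Ioi, integral_add_compl measurableSet_Ioi hf]

theorem integrable_pow_mul_exp_neg_mul_sq_add_mul {a : ℝ} (ha : 0 < a) (c : ℝ) (k : ℕ) :
    Integrable fun x : ℝ ↦ x ^ k * exp (-a * x ^ 2 + c * x) := by
  have hk : (-1 : ℝ) < k := by linarith [k.cast_nonneg (α := ℝ)]
  have hdom : Integrable fun x : ℝ ↦ exp (c ^ 2 / (2 * a)) * (x ^ k * exp (-(a / 2) * x ^ 2)) :=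
    .const_mul (by simpa using integrable_rpow_mul_exp_neg_mul_sq (half_pos ha) hk) _
  refine hdom.norm.mono' (by fun_prop) (.of_forall fun x ↦ ?_)
  have hexp : -a * x ^ 2 + c * x ≤ c ^ 2 / (2 * a) + -(a / 2) * x ^ 2 := by
    have hsq : c ^ 2 / (2 * a) + -(a / 2) * x ^ 2 - (-a * x ^ 2 + c * x)
        = a / 2 * (x - c / a) ^ 2 := by field_simp; ring
    linarith [mul_nonneg (half_pos ha).le (sq_nonneg (x - c / a))]
  rw [norm_mul, norm_mul, norm_mul, norm_of_nonneg (exp_pos _).le, norm_of_nonneg (exp_pos _).le,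
    norm_of_nonneg (exp_pos _).le, ← mul_assoc, mul_comm (exp _), mul_assoc, ← exp_add]
  gcongr

theorem integral_Ioi_pow_mul_exp_neg_mul_sq {a : ℝ} (ha : 0 < a) (k : ℕ) :
    ∫ x in Ioi (0 : ℝ), x ^ k * exp (-a * x ^ 2)
      = a ^ (-(((k : ℝ) + 1) / 2)) * (1 / 2) * Gamma (((k : ℝ) + 1) / 2) := by
  rw [← neg_div, ← integral_rpow_mul_exp_neg_mul_rpow two_pos
    (by linarith [k.cast_nonneg (α := ℝ)]) ha]
  refine setIntegral_congr_fun measurableSet_Ioi fun x _ ↦ ?_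
  rw [← rpow_natCast, ← rpow_two]

theorem hasSum_pow_mul_exp_neg_mul_sq_mul_cosh (a b x : ℝ) (k : ℕ) :
    HasSum (fun m : ℕ ↦
        (2 * b) ^ (2 * m) / (2 * m).factorial * (x ^ (k + 2 * m) * exp (-a * x ^ 2)))
      (x ^ k * exp (-a * x ^ 2) * cosh (2 * b * x)) := by
  refine ((hasSum_cosh (2 * b * x)).mul_left (x ^ k * exp (-a * x ^ 2))).congr_fun fun m ↦ ?_
  ring

theorem integrable_pow_mul_exp_neg_mul_sq_mul_cosh {a : ℝ} (ha : 0 < a) (b : ℝ) (k : ℕ) :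
    Integrable fun x : ℝ ↦ x ^ k * exp (-a * x ^ 2) * cosh (2 * b * x) := by
  have hsplit : (fun x : ℝ ↦ x ^ k * exp (-a * x ^ 2) * cosh (2 * b * x)) = fun x ↦
      (x ^ k * exp (-a * x ^ 2 + 2 * b * x) + x ^ k * exp (-a * x ^ 2 + -(2 * b) * x)) / 2 := by
    ext x
    simp only [cosh_eq, exp_add, neg_mul]
    ring
  rw [hsplit]
  exact ((integrable_pow_mul_exp_neg_mul_sq_add_mul ha _ k).add
    (integrable_pow_mul_exp_neg_mul_sq_add_mul ha _ k)).div_const 2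

theorem hasSum_integral_Ioi_pow_mul_exp_neg_mul_sq_mul_cosh {a : ℝ} (ha : 0 < a) (b : ℝ)
    (k : ℕ) :
    HasSum (fun m : ℕ ↦ (2 * b) ^ (2 * m) / (2 * m).factorial *
        ∫ x in Ioi (0 : ℝ), x ^ (k + 2 * m) * exp (-a * x ^ 2))
      (∫ x in Ioi (0 : ℝ), x ^ k * exp (-a * x ^ 2) * cosh (2 * b * x)) := by
  simp_rw [← integral_const_mul]
  refine hasSum_integral_of_nonneg (fun m ↦ ?_)
    (integrable_pow_mul_exp_neg_mul_sq_mul_cosh ha b k).integrableOn (fun m ↦ ?_)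
    (.of_forall fun x ↦ hasSum_pow_mul_exp_neg_mul_sq_mul_cosh a b x k)
  · have hk : (-1 : ℝ) < (k + 2 * m : ℕ) := by linarith [(k + 2 * m).cast_nonneg (α := ℝ)]
    exact (integrableOn_rpow_mul_exp_neg_mul_sq ha hk).congr_fun
      (fun x _ ↦ by rw [rpow_natCast]) measurableSet_Ioi |>.const_mul _
  · filter_upwards [ae_restrict_mem measurableSet_Ioi] with x (hx : 0 < x)
    have : 0 ≤ (2 * b) ^ (2 * m) := by rw [pow_mul]; positivity
    positivity

theorem Real.Gamma_add_nat_eq_mul_ascPochhammer {t : ℝ} (ht : 0 < t) (m : ℕ) :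
    Gamma (t + m) = Gamma t * (ascPochhammer ℝ m).eval t := by
  induction m with
  | zero => simp
  | succ m ih =>
    rw [Nat.cast_succ, ← add_assoc, Gamma_add_one (by positivity), ih, ascPochhammer_succ_eval]
    ring

theorem Nat.factorial_two_mul_eq_four_pow_mul_ascPochhammer_half (m : ℕ) :
    ((2 * m).factorial : ℝ) = 4 ^ m * m.factorial * (ascPochhammer ℝ m).eval (1 / 2) := by
  induction m with
  | zero => simp
  | succ m ih =>
    rw [show 2 * (m + 1) = 2 * m + 1 + 1 by ring, Nat.factorial_succ, Nat.factorial_succ,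
      Nat.factorial_succ, ascPochhammer_succ_eval]
    push_cast [ih]
    ring

theorem two_mul_coeff_mul_integral_Ioi_eq_hyp1F1_term {a : ℝ} (ha : 0 < a) (b : ℝ) (n m : ℕ) :
    2 * ((2 * b) ^ (2 * m) / (2 * m).factorial *
        ∫ x in Ioi (0 : ℝ), x ^ (n + 1 + 2 * m) * exp (-a * x ^ 2))
      = a ^ (-(((n : ℝ) + 2) / 2)) * Gamma (((n : ℝ) + 2) / 2) *
        ((ascPochhammer ℝ m).eval (((n : ℝ) + 2) / 2) * (b ^ 2 / a) ^ m /
          ((ascPochhammer ℝ m).eval (1 / 2) * m.factorial)) := by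
  have ht : (0 : ℝ) < ((n : ℝ) + 2) / 2 := by positivity
  have hexp : (((n + 1 + 2 * m : ℕ) : ℝ) + 1) / 2 = ((n : ℝ) + 2) / 2 + m := by push_cast; ring
  have hb : (2 * b) ^ (2 * m) = 4 ^ m * (b ^ 2) ^ m := by rw [pow_mul, ← mul_pow]; ring
  rw [integral_Ioi_pow_mul_exp_neg_mul_sq ha, hexp, Gamma_add_nat_eq_mul_ascPochhammer ht,
    neg_add, rpow_add ha, rpow_neg ha.le (m : ℝ), rpow_natCast,
    Nat.factorial_two_mul_eq_four_pow_mul_ascPochhammer_half, hb, div_pow]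
  have hpoch : 0 < (ascPochhammer ℝ m).eval (1 / 2 : ℝ) := ascPochhammer_pos m _ (by norm_num)
  have hfact : (0 : ℝ) < m.factorial := by exact_mod_cast m.factorial_pos
  field_simp

theorem stmt1 (a b : ℝ) (ha : 0 < a) (n : ℕ) (hn : Even n) :
    ∫ x : ℝ, |x| * x ^ n * Real.exp (-a * x ^ 2 + 2 * b * x)
      = Real.rpow a (-(((n : ℝ) + 2) / 2)) * Real.Gamma (((n : ℝ) + 2) / 2) *
        hyp1F1 (((n : ℝ) + 2) / 2) (1 / 2) (b ^ 2 / a) := by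
  have hint : Integrable fun x : ℝ ↦ |x| * x ^ n * exp (-a * x ^ 2 + 2 * b * x) := by
    refine (integrable_pow_mul_exp_neg_mul_sq_add_mul ha (2 * b) (n + 1)).norm.congr
      (.of_forall fun x ↦ ?_)
    simp only [norm_mul, norm_pow, norm_of_nonneg (exp_pos _).le, Real.norm_eq_abs, pow_succ,
      hn.pow_abs]
    ring
  have hfold : ∀ x ∈ Ioi (0 : ℝ),
      |x| * x ^ n * exp (-a * x ^ 2 + 2 * b * x) +
          |-x| * (-x) ^ n * exp (-a * (-x) ^ 2 + 2 * b * -x)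
        = 2 * (x ^ (n + 1) * exp (-a * x ^ 2) * cosh (2 * b * x)) := fun x (hx : 0 < x) ↦ by
    rw [abs_neg, hn.neg_pow, abs_of_pos hx, cosh_eq, neg_sq, mul_neg, exp_add, exp_add, pow_succ]
    ring
  calc ∫ x : ℝ, |x| * x ^ n * exp (-a * x ^ 2 + 2 * b * x)
      = 2 * ∫ x in Ioi (0 : ℝ), x ^ (n + 1) * exp (-a * x ^ 2) * cosh (2 * b * x) := by
        rw [integral_eq_integral_Ioi_add_comp_neg hint,
          setIntegral_congr_fun measurableSet_Ioi hfold, integral_const_mul]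
    _ = ∑' m : ℕ, 2 * ((2 * b) ^ (2 * m) / (2 * m).factorial *
          ∫ x in Ioi (0 : ℝ), x ^ (n + 1 + 2 * m) * exp (-a * x ^ 2)) := by
        rw [tsum_mul_left, (hasSum_integral_Ioi_pow_mul_exp_neg_mul_sq_mul_cosh ha b _).tsum_eq]
    _ = _ := by
        simp_rw [two_mul_coeff_mul_integral_Ioi_eq_hyp1F1_term ha, tsum_mul_left, hyp1F1,
          rpow_eq_pow]
end

section
/- With |ρ| < 1 and h(x,t) the density of the ratio of jointly Gaussian variables with means ν_v, ν_w and covariance t[[1,ρ],[ρ,1]], for every fixed x we have lim_{t→∞} h(x,t) = √(1−ρ²) / (π(x² − 2ρx + 1)). -/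
/-- The density of the ratio `W/V` of jointly Gaussian variables with means `νv, νw`
and covariance `t·[[1, ρ],[ρ, 1]]`, as given by the explicit formula of Theorem 1. -/
noncomputable def ratioDensity (ρ νv νw x t : ℝ) : ℝ :=
  Real.exp (-((νv ^ 2 - 2 * ρ * νv * νw + νw ^ 2) / (2 * (1 - ρ ^ 2) * t))) /
      (2 * Real.pi * Real.sqrt ((1 - ρ ^ 2) * t ^ 2) *
        ((1 - 2 * ρ * x + x ^ 2) / (2 * (1 - ρ ^ 2) * t))) *
    hyp1F1 1 (1 / 2)
      (((νv - ρ * νw + (νw - ρ * νv) * x) / (2 * (1 - ρ ^ 2) * t)) ^ 2 /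
        ((1 - 2 * ρ * x + x ^ 2) / (2 * (1 - ρ ^ 2) * t)))

/-!
For `t > 0` the prefactor `e^{-c}/(2π √d a)` equals `e^{-c} √(1-ρ²)/(π(x²-2ρx+1))`, and
`c → 0`, while the argument `b²/a` of `₁F₁` is a constant multiple of `1/t`. So it remains to see
that `₁F₁(1, 1/2, ·)` is continuous at `0`, where it equals `1`. For `β > 0` one has
`|(α)_k| ≤ M^k (β)_k` with `M = max 1 (|α|/β)`, so the series of `₁F₁(α, β, z)` is dominated by
the exponential series of `M|z|`, locally uniformly in `z`.
-/

open Filter Topology Real Polynomial Set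

noncomputable def hyp1F1Term (a b z : ℝ) (k : ℕ) : ℝ :=
  ((ascPochhammer ℝ k).eval a * z ^ k) / ((ascPochhammer ℝ k).eval b * (Nat.factorial k))

lemma hyp1F1_eq_tsum (a b z : ℝ) : hyp1F1 a b z = ∑' k, hyp1F1Term a b z k := rfl

lemma hyp1F1_zero (a b : ℝ) : hyp1F1 a b 0 = 1 := by
  rw [hyp1F1_eq_tsum, tsum_eq_single 0 fun k hk => by simp [hyp1F1Term, zero_pow hk]]
  simp [hyp1F1Term]

lemma abs_ascPochhammer_eval_le {a b c : ℝ} (hb : 0 < b) (hc : 1 ≤ c) (hab : |a| ≤ c * b)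
    (k : ℕ) : |(ascPochhammer ℝ k).eval a| ≤ c ^ k * (ascPochhammer ℝ k).eval b := by
  induction k with
  | zero => simp
  | succ k ih =>
    have hak : |a + k| ≤ c * (b + k) :=
      calc |a + k| ≤ |a| + k := by simpa using abs_add_le a k
        _ ≤ c * b + c * k := add_le_add hab (le_mul_of_one_le_left k.cast_nonneg hc)
        _ = c * (b + k) := by ring
    have hpos := ascPochhammer_pos k b hb
    rw [ascPochhammer_succ_eval, ascPochhammer_succ_eval, abs_mul, pow_succ]
    calc _ ≤ c ^ k * (ascPochhammer ℝ k).eval b * (c * (b + k)) :=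
          mul_le_mul ih hak (abs_nonneg _) (by positivity)
      _ = _ := by ring

lemma abs_hyp1F1Term_le (a : ℝ) {b : ℝ} (hb : 0 < b) (z : ℝ) (k : ℕ) :
    |hyp1F1Term a b z k| ≤ (max 1 (|a| / b) * |z|) ^ k / k.factorial := by
  have hpos := ascPochhammer_pos k b hb
  have hpoch := abs_ascPochhammer_eval_le hb (le_max_left 1 (|a| / b))
    ((div_le_iff₀ hb).1 (le_max_right _ _)) k
  rw [hyp1F1Term, abs_div, abs_mul, abs_mul, abs_pow, abs_of_pos hpos, Nat.abs_cast, mul_pow,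
    div_le_div_iff₀ (by positivity) (by positivity)]
  calc _ ≤ max 1 (|a| / b) ^ k * (ascPochhammer ℝ k).eval b * |z| ^ k * k.factorial := by
        gcongr
    _ = _ := by ring

lemma continuous_hyp1F1 (a : ℝ) {b : ℝ} (hb : 0 < b) : Continuous (hyp1F1 a b) := by
  refine continuous_iff_continuousAt.2 fun z₀ => ?_
  obtain ⟨R, hR⟩ : ∃ R, Icc (-R) R ∈ 𝓝 z₀ :=
    ⟨|z₀| + 1, Icc_mem_nhds (by linarith [neg_abs_le z₀]) (by linarith [le_abs_self z₀])⟩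
  have hterm (k : ℕ) : Continuous (hyp1F1Term a b · k) := by unfold hyp1F1Term; fun_prop
  have hcont : ContinuousOn (hyp1F1 a b) (Icc (-R) R) :=
    continuousOn_tsum (fun k => (hterm k).continuousOn)
      (summable_pow_div_factorial (max 1 (|a| / b) * R)) fun k z hz =>
        (abs_hyp1F1Term_le a hb z k).trans (by gcongr; exact abs_le.2 hz)
  exact hcont.continuousAt hR

lemma sq_sub_two_mul_mul_add_one_pos {ρ : ℝ} (hρ : |ρ| < 1) (x : ℝ) :
    0 < x ^ 2 - 2 * ρ * x + 1 := by
  nlinarith [sq_nonneg (x - ρ), sq_abs ρ, abs_nonneg ρ]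

lemma ratioDensity_eq_of_pos {ρ : ℝ} (hρ : |ρ| < 1) (νv νw x : ℝ) {t : ℝ} (ht : 0 < t) :
    ratioDensity ρ νv νw x t =
      exp (-((νv ^ 2 - 2 * ρ * νv * νw + νw ^ 2) / (2 * (1 - ρ ^ 2) * t))) *
        (√(1 - ρ ^ 2) / (π * (x ^ 2 - 2 * ρ * x + 1))) *
        hyp1F1 1 (1 / 2) ((νv - ρ * νw + (νw - ρ * νv) * x) ^ 2 /
          (2 * (1 - ρ ^ 2) * (x ^ 2 - 2 * ρ * x + 1) * t)) := by
  have hs : 0 < 1 - ρ ^ 2 := sub_pos.2 ((sq_lt_one_iff_abs_lt_one ρ).2 hρ)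
  have hQ := sq_sub_two_mul_mul_add_one_pos hρ x
  have hsqrt : √((1 - ρ ^ 2) * t ^ 2) = √(1 - ρ ^ 2) * t := by
    rw [sqrt_mul hs.le, sqrt_sq ht.le]
  rw [ratioDensity, hsqrt, show 1 - 2 * ρ * x + x ^ 2 = x ^ 2 - 2 * ρ * x + 1 by ring]
  congr 2
  · field_simp
    rw [sq_sqrt hs.le]
  · field_simp

theorem stmt10 (ρ νv νw : ℝ) (hρ : |ρ| < 1) (x : ℝ) :
    Filter.Tendsto (fun t => ratioDensity ρ νv νw x t) Filter.atTop
      (nhds (Real.sqrt (1 - ρ ^ 2) / (Real.pi * (x ^ 2 - 2 * ρ * x + 1)))) := by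
  have hs : 0 < 1 - ρ ^ 2 := sub_pos.2 ((sq_lt_one_iff_abs_lt_one ρ).2 hρ)
  have hQ := sq_sub_two_mul_mul_add_one_pos hρ x
  have hexp : Tendsto (fun t => exp (-((νv ^ 2 - 2 * ρ * νv * νw + νw ^ 2) /
      (2 * (1 - ρ ^ 2) * t)))) atTop (𝓝 1) := by
    simpa using ((tendsto_id.const_mul_atTop (by positivity)).const_div_atTop _).neg.rexp
  have hF : Tendsto (fun t => hyp1F1 1 (1 / 2) ((νv - ρ * νw + (νw - ρ * νv) * x) ^ 2 /
      (2 * (1 - ρ ^ 2) * (x ^ 2 - 2 * ρ * x + 1) * t))) atTop (𝓝 1) :=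
    ((continuous_hyp1F1 1 (by norm_num)).tendsto' 0 1 (hyp1F1_zero 1 _)).comp
      ((tendsto_id.const_mul_atTop (by positivity)).const_div_atTop _)
  have hlim := (hexp.mul_const (√(1 - ρ ^ 2) / (π * (x ^ 2 - 2 * ρ * x + 1)))).mul hF
  rw [one_mul, mul_one] at hlim
  refine hlim.congr' ?_
  filter_upwards [eventually_gt_atTop 0] with t ht
  rw [ratioDensity_eq_of_pos hρ νv νw x ht]
end

section
/- Let a > 0, b ∈ ℝ and define Lₙ = ∫_{-∞}^{∞} |λ| λⁿ e^{-aλ² + 2bλ} dλ. Then L₄ = (3b/(2a²))·L₁ + ((2a + b²)/a²)·L₂. -/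
/-!
Differentiating `|x| x^(n+1) e^(-a x² + 2 b x)` gives
`((n+2) |x| x^n + 2b |x| x^(n+1) - 2a |x| x^(n+2)) e^(-a x² + 2 b x)`, whose integral over `ℝ`
vanishes by the Gaussian decay. Hence `(n+2) Lₙ + 2b Lₙ₊₁ = 2a Lₙ₊₂`, and the cases `n = 1, 2`
eliminate `L₃`. At `x = 0` the function `|x| x^(n+1)` is still differentiable, with derivative `0`.
-/

open Real MeasureTheory Filter Topology

lemma hasDerivAt_abs_mul_pow_succ (n : ℕ) (x : ℝ) :
    HasDerivAt (fun y : ℝ => |y| * y ^ (n + 1)) ((n + 2) * (|x| * x ^ n)) x := by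
  rcases eq_or_ne x 0 with rfl | hx
  · rw [hasDerivAt_iff_tendsto_slope]
    have hslope :
        (fun y : ℝ => |y| * y ^ n) =ᶠ[𝓝[≠] 0] slope (fun y : ℝ => |y| * y ^ (n + 1)) 0 := by
      filter_upwards [self_mem_nhdsWithin] with y (hy : y ≠ 0)
      simp [slope_def_field, pow_succ]
      field_simp
    have hcont : Continuous fun y : ℝ => |y| * y ^ n := by fun_prop
    simpa using (hcont.tendsto 0 |>.mono_left nhdsWithin_le_nhds).congr' hslope
  · refine ((hasDerivAt_abs hx).mul (hasDerivAt_pow (n + 1) x)).congr_deriv ?_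
    rw [← sign_mul_self x]
    push_cast
    ring

lemma integrable_pow_mul_exp_neg_mul_sq {b : ℝ} (hb : 0 < b) (n : ℕ) :
    Integrable fun x : ℝ => x ^ n * exp (-b * x ^ 2) := by
  have hn : (-1 : ℝ) < n := by linarith [n.cast_nonneg (α := ℝ)]
  refine (integrable_rpow_mul_exp_neg_mul_sq hb hn).congr ?_
  filter_upwards with x
  rw [rpow_natCast]

lemma exp_quadratic_le_mul_exp_neg_half_mul_sq (a b x : ℝ) (ha : 0 < a) :
    exp (-a * x ^ 2 + 2 * b * x) ≤ exp (2 * b ^ 2 / a) * exp (-(a / 2) * x ^ 2) := by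
  rw [← exp_add, exp_le_exp, ← sub_nonneg]
  have hsq : 2 * b ^ 2 / a + -(a / 2) * x ^ 2 - (-a * x ^ 2 + 2 * b * x)
      = (a * x - 2 * b) ^ 2 / (2 * a) := by
    field_simp
    ring
  rw [hsq]
  positivity

noncomputable def absPowGauss (a b : ℝ) (n : ℕ) (x : ℝ) : ℝ :=
  |x| * x ^ n * exp (-a * x ^ 2 + 2 * b * x)

lemma integrable_absPowGauss {a : ℝ} (ha : 0 < a) (b : ℝ) (n : ℕ) :
    Integrable (absPowGauss a b n) := by
  refine ((integrable_pow_mul_exp_neg_mul_sq (half_pos ha) (n + 1)).norm.const_mul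
    (exp (2 * b ^ 2 / a))).mono' (by unfold absPowGauss; fun_prop) (.of_forall fun x => ?_)
  calc ‖absPowGauss a b n x‖ = |x| ^ (n + 1) * exp (-a * x ^ 2 + 2 * b * x) := by
        simp [absPowGauss, pow_succ]; ring
    _ ≤ |x| ^ (n + 1) * (exp (2 * b ^ 2 / a) * exp (-(a / 2) * x ^ 2)) := by
        gcongr; exact exp_quadratic_le_mul_exp_neg_half_mul_sq a b x ha
    _ = exp (2 * b ^ 2 / a) * ‖x ^ (n + 1) * exp (-(a / 2) * x ^ 2)‖ := by
        simp; ring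

lemma hasDerivAt_absPowGauss_succ (a b : ℝ) (n : ℕ) (x : ℝ) :
    HasDerivAt (absPowGauss a b (n + 1))
      ((n + 2) * absPowGauss a b n x + 2 * b * absPowGauss a b (n + 1) x
        - 2 * a * absPowGauss a b (n + 2) x) x := by
  have hexp : HasDerivAt (fun y : ℝ => exp (-a * y ^ 2 + 2 * b * y))
      (exp (-a * x ^ 2 + 2 * b * x) * (-a * (2 * x) + 2 * b)) x := by
    have hquad : HasDerivAt (fun y : ℝ => -a * y ^ 2 + 2 * b * y) (-a * (2 * x) + 2 * b) x := by
      simpa using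
        ((hasDerivAt_pow 2 x).const_mul (-a)).fun_add ((hasDerivAt_id x).const_mul (2 * b))
    exact hquad.exp
  refine ((hasDerivAt_abs_mul_pow_succ n x).mul hexp).congr_deriv ?_
  simp only [absPowGauss]
  ring

lemma absPowGauss_integral_recurrence {a : ℝ} (ha : 0 < a) (b : ℝ) (n : ℕ) :
    (n + 2) * (∫ x, absPowGauss a b n x) + 2 * b * (∫ x, absPowGauss a b (n + 1) x)
      = 2 * a * ∫ x, absPowGauss a b (n + 2) x := by
  have hint := integrable_absPowGauss ha b
  have hibp := integral_eq_zero_of_hasDerivAt_of_integrable (hasDerivAt_absPowGauss_succ a b n)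
    ((((hint n).const_mul _).add ((hint (n + 1)).const_mul _)).sub ((hint (n + 2)).const_mul _))
    (hint (n + 1))
  rw [integral_sub, integral_add, integral_const_mul, integral_const_mul, integral_const_mul]
    at hibp
  · linarith
  · exact (hint n).const_mul _
  · exact (hint (n + 1)).const_mul _
  · exact ((hint n).const_mul _).add ((hint (n + 1)).const_mul _)
  · exact (hint (n + 2)).const_mul _

theorem stmt15 (a b : ℝ) (ha : 0 < a) :
    (∫ l : ℝ, |l| * l ^ 4 * Real.exp (-a * l ^ 2 + 2 * b * l))
      = (3 * b / (2 * a ^ 2)) * (∫ l : ℝ, |l| * l ^ 1 * Real.exp (-a * l ^ 2 + 2 * b * l)) +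
        ((2 * a + b ^ 2) / a ^ 2) * (∫ l : ℝ, |l| * l ^ 2 * Real.exp (-a * l ^ 2 + 2 * b * l)) := by
  change ∫ x, absPowGauss a b 4 x = 3 * b / (2 * a ^ 2) * (∫ x, absPowGauss a b 1 x)
    + (2 * a + b ^ 2) / a ^ 2 * ∫ x, absPowGauss a b 2 x
  have h1 := absPowGauss_integral_recurrence ha b 1
  have h2 := absPowGauss_integral_recurrence ha b 2
  norm_num at h1 h2
  field_simp
  linear_combination (-a) * h2 - b * h1
end
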